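/- arXiv:math/0106222 — 3 statements merged into one kernel-verified Lean document; each statement's English description precedes it below -/
import Mathlib

section
/- For n=2, m=0, the operator M = (x₁∂₁)² + (x₂∂₂)² + k·((x₁+x₂)/(x₁−x₂))·(x₁∂₁ − x₂∂₂) maps symmetric polynomials in x₁,x₂ to symmetric polynomials in x₁,x₂ (the apparent pole at x₁ = x₂ cancels). -/
open MvPolynomial

/-- The field of rational functions in `x₁, x₂` over `ℂ`. -/
noncomputable abbrev K2 : Type := FractionRing (MvPolynomial (Fin 2) ℂ)

noncomputable abbrev φ2 : MvPolynomial (Fin 2) ℂ →+* K2 :=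
  algebraMap (MvPolynomial (Fin 2) ℂ) K2

/-- The Euler operator `xᵢ ∂/∂xᵢ` on polynomials. -/
noncomputable abbrev euler2 (i : Fin 2) (f : MvPolynomial (Fin 2) ℂ) :
    MvPolynomial (Fin 2) ℂ :=
  X i * pderiv i f

/-- The operator `M = (x₁∂₁)² + (x₂∂₂)² + k((x₁+x₂)/(x₁−x₂))(x₁∂₁ − x₂∂₂)`,
applied to a polynomial, with values in the field of rational functions. -/
noncomputable def M2 (k : ℂ) (f : MvPolynomial (Fin 2) ℂ) : K2 :=
  φ2 (euler2 0 (euler2 0 f)) + φ2 (euler2 1 (euler2 1 f)) +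
    φ2 (C k * (X 0 + X 1) * (euler2 0 f - euler2 1 f)) / φ2 (X 0 - X 1)

-- swap commutation with euler
lemma euler_swap (h : MvPolynomial (Fin 2) ℂ) :
    rename (Equiv.swap (0:Fin 2) 1) (euler2 0 h) = euler2 1 (rename (Equiv.swap (0:Fin 2) 1) h) := by
  have hinj : Function.Injective (Equiv.swap (0:Fin 2) 1 : Fin 2 → Fin 2) := (Equiv.swap 0 1).injective
  have := pderiv_rename hinj 0 h
  simp only [map_mul, rename_X] at *
  rw [show (Equiv.swap (0:Fin 2) 1) 0 = 1 by decide] at *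
  rw [← this]

lemma euler_swap' (h : MvPolynomial (Fin 2) ℂ) :
    rename (Equiv.swap (0:Fin 2) 1) (euler2 1 h) = euler2 0 (rename (Equiv.swap (0:Fin 2) 1) h) := by
  have hinj : Function.Injective (Equiv.swap (0:Fin 2) 1 : Fin 2 → Fin 2) := (Equiv.swap 0 1).injective
  have := pderiv_rename hinj 1 h
  simp only [map_mul, rename_X] at *
  rw [show (Equiv.swap (0:Fin 2) 1) 1 = 0 by decide] at *
  rw [← this]

-- diagonal map and the dvd lemma
noncomputable def diag2 : MvPolynomial (Fin 2) ℂ →+* MvPolynomial (Fin 1) ℂ :=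
  (aeval (fun _ : Fin 2 => (X 0 : MvPolynomial (Fin 1) ℂ))).toRingHom

lemma eval_finSuccEquiv (h : MvPolynomial (Fin 2) ℂ) :
    Polynomial.eval (X 0 : MvPolynomial (Fin 1) ℂ) (finSuccEquiv ℂ 1 h) = diag2 h := by
  have : (Polynomial.evalRingHom (X 0 : MvPolynomial (Fin 1) ℂ)).comp
      ((finSuccEquiv ℂ 1) : MvPolynomial (Fin 2) ℂ →+* Polynomial (MvPolynomial (Fin 1) ℂ)) = diag2 := by
    apply MvPolynomial.ringHom_ext
    · intro a; simp [diag2, finSuccEquiv_apply, algebraMap_eq]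
    · intro i
      fin_cases i
      · simp [diag2, finSuccEquiv_X_zero]
      · show Polynomial.eval (X 0) ((finSuccEquiv ℂ 1) (X (Fin.succ 0))) = diag2 (X (Fin.succ 0))
        rw [finSuccEquiv_X_succ]
        simp [diag2]
  exact congrFun (congrArg DFunLike.coe this) h

lemma diag_rename (h : MvPolynomial (Fin 2) ℂ) :
    diag2 (rename (Equiv.swap (0:Fin 2) 1) h) = diag2 h := by
  have : diag2.comp ((rename (Equiv.swap (0:Fin 2) 1) : MvPolynomial (Fin 2) ℂ →ₐ[ℂ] MvPolynomial (Fin 2) ℂ) : MvPolynomial (Fin 2) ℂ →+* MvPolynomial (Fin 2) ℂ) = diag2 := by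
    apply MvPolynomial.ringHom_ext
    · intro a; simp [diag2]
    · intro i; simp [diag2]
  exact congrFun (congrArg DFunLike.coe this) h

lemma dvd_of_antisym (q : MvPolynomial (Fin 2) ℂ)
    (hq : rename (Equiv.swap (0:Fin 2) 1) q = -q) :
    (X 0 - X 1 : MvPolynomial (Fin 2) ℂ) ∣ q := by
  have hd : diag2 q = 0 := by
    have h1 : diag2 q = - diag2 q := by
      conv_lhs => rw [← diag_rename q, hq, map_neg]
    have h2 : (2 : MvPolynomial (Fin 1) ℂ) * diag2 q = 0 := by linear_combination h1
    rcases mul_eq_zero.mp h2 with h | h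
    · exact absurd h two_ne_zero
    · exact h
  have he : finSuccEquiv ℂ 1 (X 0 - X 1 : MvPolynomial (Fin 2) ℂ)
      = Polynomial.X - Polynomial.C (X 0) := by
    rw [map_sub, finSuccEquiv_X_zero, show (1 : Fin 2) = Fin.succ 0 from rfl, finSuccEquiv_X_succ]
  have : finSuccEquiv ℂ 1 (X 0 - X 1 : MvPolynomial (Fin 2) ℂ) ∣ finSuccEquiv ℂ 1 q := by
    rw [he, Polynomial.dvd_iff_isRoot, Polynomial.IsRoot, eval_finSuccEquiv, hd]
  exact (map_dvd_iff (finSuccEquiv ℂ 1)).mp this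


/-- For `n = 2`, `m = 0`, the deformed operator `M` maps symmetric polynomials in
`x₁, x₂` to symmetric polynomials: the apparent pole at `x₁ = x₂` cancels. -/
theorem M2_symmetric_to_symmetric (k : ℂ) (f : MvPolynomial (Fin 2) ℂ)
    (hf : f.IsSymmetric) :
    ∃ g : MvPolynomial (Fin 2) ℂ, g.IsSymmetric ∧ M2 k f = φ2 g := by
  have hfτ : rename (⇑(Equiv.swap (0:Fin 2) 1)) f = f := hf (Equiv.swap 0 1)
  have hpτ : rename (⇑(Equiv.swap (0:Fin 2) 1)) (euler2 0 f - euler2 1 f)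
      = -(euler2 0 f - euler2 1 f) := by
    rw [map_sub, euler_swap, euler_swap', hfτ]; ring
  have hqτ : rename (⇑(Equiv.swap (0:Fin 2) 1)) ((X 0 + X 1) * (euler2 0 f - euler2 1 f))
      = -((X 0 + X 1) * (euler2 0 f - euler2 1 f)) := by
    rw [map_mul, map_add, rename_X, rename_X, hpτ,
      show (Equiv.swap (0:Fin 2) 1) 0 = 1 by decide,
      show (Equiv.swap (0:Fin 2) 1) 1 = 0 by decide]
    ring
  obtain ⟨g', hg'⟩ := dvd_of_antisym _ hqτ
  have hX : (X 0 - X 1 : MvPolynomial (Fin 2) ℂ) ≠ 0 :=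
    sub_ne_zero.mpr (X_injective.ne (by decide))
  have hg'τ : rename (⇑(Equiv.swap (0:Fin 2) 1)) g' = g' := by
    apply mul_left_cancel₀ hX
    have h1 : rename (⇑(Equiv.swap (0:Fin 2) 1)) ((X 0 + X 1) * (euler2 0 f - euler2 1 f))
        = rename (⇑(Equiv.swap (0:Fin 2) 1)) ((X 0 - X 1) * g') := by rw [← hg']
    rw [hqτ, map_mul, map_sub, rename_X, rename_X,
      show (Equiv.swap (0:Fin 2) 1) 0 = 1 by decide,
      show (Equiv.swap (0:Fin 2) 1) 1 = 0 by decide, hg'] at h1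
    linear_combination h1
  refine ⟨euler2 0 (euler2 0 f) + euler2 1 (euler2 1 f) + C k * g', ?_, ?_⟩
  · intro σ
    have hσ : σ = 1 ∨ σ = Equiv.swap 0 1 := by revert σ; decide
    rcases hσ with rfl | rfl
    · simp [rename_id]
    · rw [map_add, map_add, euler_swap, euler_swap, euler_swap', euler_swap', hfτ,
        show rename (⇑(Equiv.swap (0:Fin 2) 1)) (C k * g') = C k * g' by
          rw [map_mul, rename_C, hg'τ]]
      ring
  · have hφX : φ2 (X 0 - X 1 : MvPolynomial (Fin 2) ℂ) ≠ 0 := by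
      rw [Ne, map_eq_zero_iff φ2 (IsFractionRing.injective _ _)]
      exact hX
    have key : C k * (X 0 + X 1) * (euler2 0 f - euler2 1 f)
        = (X 0 - X 1) * (C k * g') := by
      rw [show C k * (X 0 + X 1) * (euler2 0 f - euler2 1 f)
          = C k * ((X 0 + X 1) * (euler2 0 f - euler2 1 f)) by ring, hg']
      ring
    rw [M2, key]
    rw [show φ2 ((X 0 - X 1) * (C k * g')) / φ2 (X 0 - X 1) = φ2 (C k * g') by
      rw [map_mul, mul_div_cancel_left₀ _ hφX]]
    rw [← map_add, ← map_add]
end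

section
/- The power sums S^{p,k} = Σᵢ xᵢ^p − (1/k)Σⱼ yⱼ^p for p = 1,…,n+m are algebraically independent over ℂ for generic k: specifically for n = m = 1 and k transcendental over ℚ, S^{1,k} and S^{2,k} are algebraically independent in ℂ(k)[x,y]. -/
open MvPolynomial

private lemma ratfunc_X_ne_one : (RatFunc.X : RatFunc ℚ) ≠ 1 := by
  intro h
  have h' : (algebraMap (Polynomial ℚ) (RatFunc ℚ)) Polynomial.X
      = (algebraMap (Polynomial ℚ) (RatFunc ℚ)) 1 := by
    rw [map_one]; exact h
  have := RatFunc.algebraMap_injective ℚ h'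
  simpa using congrArg Polynomial.natDegree this

/-- For `n = m = 1` and `k` an indeterminate (so `F = ℚ(k)`), the deformed power
sums `S^{1,k} = x − y/k` and `S^{2,k} = x² − y²/k` are algebraically independent
over `F`: there is no nonzero polynomial `P ∈ F[u,v]` with `P(S^{1,k}, S^{2,k}) = 0`. -/
theorem super_power_sums_algebraically_independent :
    AlgebraicIndependent (RatFunc ℚ)
      ![(X 0 - C (RatFunc.X)⁻¹ * X 1 : MvPolynomial (Fin 2) (RatFunc ℚ)),
        (X 0 ^ 2 - C (RatFunc.X)⁻¹ * X 1 ^ 2 : MvPolynomial (Fin 2) (RatFunc ℚ))] := by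
  set F := RatFunc ℚ
  set c : F := (RatFunc.X)⁻¹ with hc_def
  have hk : (RatFunc.X : F) ≠ 0 := RatFunc.X_ne_zero
  have hc0 : c ≠ 0 := inv_ne_zero hk
  have hc1 : c ≠ 1 := fun h => ratfunc_X_ne_one (inv_eq_one.mp h)
  have hcm1 : c - 1 ≠ 0 := sub_ne_zero.mpr hc1
  set d : F := (c - 1)⁻¹ with hd_def
  have hcd : (c - 1) * d = 1 := mul_inv_cancel₀ hcm1
  set a : F := c ^ 2 - c with ha_def
  have ha0 : a ≠ 0 := by
    have h : a = c * (c - 1) := by rw [ha_def]; ring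
    rw [h]; exact mul_ne_zero hc0 hcm1
  set e : F := 1 - c * d with he_def
  -- the relevant algebra homomorphisms
  set φ : MvPolynomial (Fin 2) F →ₐ[F] MvPolynomial (Fin 2) F :=
    aeval ![(X 0 - C c * X 1 : MvPolynomial (Fin 2) F),
      (X 0 ^ 2 - C c * X 1 ^ 2 : MvPolynomial (Fin 2) F)] with hφ
  set σ : MvPolynomial (Fin 2) F →ₐ[F] MvPolynomial (Fin 2) F :=
    aeval ![(X 0 + C c * X 1 : MvPolynomial (Fin 2) F), X 1] with hσ
  set τ : MvPolynomial (Fin 2) F →ₐ[F] MvPolynomial (Fin 2) F :=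
    aeval ![(X 0 : MvPolynomial (Fin 2) F), X 1 - C d * X 0] with hτ
  set w : MvPolynomial (Fin 2) F →ₐ[F] MvPolynomial (Fin 2) F :=
    aeval ![(X 0 : MvPolynomial (Fin 2) F), C a * X 1 + C e * X 0 ^ 2] with hw
  set w' : MvPolynomial (Fin 2) F →ₐ[F] MvPolynomial (Fin 2) F :=
    aeval ![(X 0 : MvPolynomial (Fin 2) F), C a⁻¹ * (X 1 - C e * X 0 ^ 2)] with hw'
  set ψ : MvPolynomial (Fin 2) F →ₐ[F] MvPolynomial (Fin 2) F :=
    aeval ![(X 0 : MvPolynomial (Fin 2) F), X 1 ^ 2] with hψ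
  -- ψ is injective because X 0 and (X 1)² are algebraically independent
  have hXX2 : AlgebraicIndependent F ![(X 0 : MvPolynomial (Fin 2) F), X 1 ^ 2] := by
    have htrans : ∀ i : Fin 2,
        Transcendental F ((![Polynomial.X, Polynomial.X ^ 2] : Fin 2 → Polynomial F) i) := by
      intro i
      fin_cases i
      · show Transcendental F (Polynomial.X : Polynomial F)
        exact Polynomial.transcendental_X F
      · show Transcendental F ((Polynomial.X : Polynomial F) ^ 2)
        exact Polynomial.transcendental _
          (by rw [Polynomial.natDegree_X_pow]; norm_num)
          (by rw [Polynomial.leadingCoeff_X_pow]; exact Submonoid.one_mem _)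
    have h := (MvPolynomial.algebraicIndependent_X (Fin 2) F).polynomial_aeval_of_transcendental
      htrans
    have heq : (fun i => Polynomial.aeval ((X : Fin 2 → MvPolynomial (Fin 2) F) i)
        ((![Polynomial.X, Polynomial.X ^ 2] : Fin 2 → Polynomial F) i))
        = ![(X 0 : MvPolynomial (Fin 2) F), X 1 ^ 2] := by
      funext i; fin_cases i <;> simp
    rwa [heq] at h
  have hψinj : Function.Injective ψ := algebraicIndependent_iff_injective_aeval.mp hXX2
  -- w is injective since w' is a left inverse
  have hCa : (C a⁻¹ * C a : MvPolynomial (Fin 2) F) = 1 := by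
    rw [← C_mul, inv_mul_cancel₀ ha0, C_1]
  have hwinv : w'.comp w = AlgHom.id F _ := by
    apply MvPolynomial.algHom_ext
    intro i
    fin_cases i
    · simp [hw, hw']
    · show w' (w (X 1)) = X 1
      simp only [hw, hw', aeval_X, Matrix.cons_val_one, Matrix.head_cons, Matrix.cons_val_zero,
        map_add, map_mul, map_sub, map_pow, aeval_C, algebraMap_eq]
      linear_combination (X 1 - C e * (X 0 : MvPolynomial (Fin 2) F) ^ 2) * hCa
  have hwinj : Function.Injective w := by
    intro p q hpq
    have h2 := congrArg w' hpq
    rwa [← AlgHom.comp_apply, ← AlgHom.comp_apply, hwinv, AlgHom.id_apply, AlgHom.id_apply] at h2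
  -- the key identity: τ ∘ σ ∘ φ = ψ ∘ w
  have hCcd : ((C c - 1) * C d : MvPolynomial (Fin 2) F) = 1 := by
    rw [show ((C c - 1 : MvPolynomial (Fin 2) F)) = C (c - 1) by rw [C_sub, C_1], ← C_mul, hcd,
      C_1]
  have key0 : τ (σ (φ (X 0 : MvPolynomial (Fin 2) F))) = ψ (w (X 0)) := by
    simp only [hφ, hσ, hτ, hψ, hw, aeval_X, Matrix.cons_val_zero, Matrix.cons_val_one,
      Matrix.head_cons, map_add, map_mul, map_sub, map_pow, aeval_C, algebraMap_eq]
    ring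
  have key1 : τ (σ (φ (X 1 : MvPolynomial (Fin 2) F))) = ψ (w (X 1)) := by
    simp only [hφ, hσ, hτ, hψ, hw, aeval_X, Matrix.cons_val_zero, Matrix.cons_val_one,
      Matrix.head_cons, map_add, map_mul, map_sub, map_pow, aeval_C, algebraMap_eq,
      he_def, ha_def, C_sub, C_mul, C_pow, C_1, map_one]
    linear_combination (C c * C d * (X 0 : MvPolynomial (Fin 2) F) ^ 2
      - 2 * C c * X 0 * X 1) * hCcd
  have hkey : τ.comp (σ.comp φ) = ψ.comp w := by
    apply MvPolynomial.algHom_ext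
    intro i
    fin_cases i
    · exact key0
    · exact key1
  -- conclude injectivity of φ
  have hφinj : Function.Injective φ := by
    intro p q hpq
    have h1 : (ψ.comp w) p = (ψ.comp w) q := by
      rw [← hkey]
      simp only [AlgHom.comp_apply, hpq]
    exact hwinj (hψinj h1)
  exact algebraicIndependent_iff_injective_aeval.mpr hφinj
end

section
/- For n=2, m=0 and any partition λ = (λ₁, λ₂), let m_λ = x₁^{λ₁}x₂^{λ₂} + x₁^{λ₂}x₂^{λ₁} and let M = (x₁∂₁)² + (x₂∂₂)² + k((x₁+x₂)/(x₁−x₂))(x₁∂₁−x₂∂₂). Then M(m_λ) − (λ₁²+λ₂²+k(λ₁−λ₂)) m_λ is a linear combination of m_μ with μ = (λ₁−j, λ₂+j), 1 ≤ j ≤ (λ₁−λ₂)/2. -/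
open MvPolynomial

/-- The symmetric monomial `m_λ` for a partition `λ = (a ≥ b)` in two variables. -/
noncomputable def mSym (a b : ℕ) : MvPolynomial (Fin 2) ℂ :=
  if a = b then X 0 ^ a * X 1 ^ a else X 0 ^ a * X 1 ^ b + X 0 ^ b * X 1 ^ a

section Aux

variable {R : Type*} [CommRing R]

/-- Antisymmetric monomial difference of degree `d+1`. -/
def uu (x y : R) (d j : ℕ) : R := x ^ (d + 1 - j) * y ^ j - x ^ j * y ^ (d + 1 - j)

lemma uu_step (x y : R) {d j : ℕ} (h2 : 2 * j < d) :
    (x - y) * (x ^ (d - j) * y ^ j + x ^ j * y ^ (d - j)) = uu x y d j - uu x y d (j + 1) := by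
  obtain ⟨e, rfl⟩ : ∃ e, d = 2 * j + 1 + e := ⟨d - (2 * j + 1), by omega⟩
  simp only [uu, show 2 * j + 1 + e - j = j + 1 + e from by omega,
    show 2 * j + 1 + e + 1 - j = j + 2 + e from by omega,
    show 2 * j + 1 + e + 1 - (j + 1) = j + 1 + e from by omega]
  ring

lemma tele (x y : R) (d : ℕ) (hd : 1 ≤ d) :
    (x - y) * ∑ j ∈ Finset.Icc 1 (d / 2),
      (if d - j = j then x ^ j * y ^ j else x ^ (d - j) * y ^ j + x ^ j * y ^ (d - j)) =
      uu x y d 1 := by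
  rw [Finset.mul_sum]
  rcases Nat.even_or_odd d with ⟨h, hd2⟩ | ⟨h, hd2⟩
  · -- d = h + h, h ≥ 1
    obtain ⟨h', rfl⟩ : ∃ h', h = h' + 1 := ⟨h - 1, by omega⟩
    have hdiv : d / 2 = h' + 1 := by omega
    rw [hdiv, Finset.sum_Icc_succ_top (by omega : 1 ≤ h' + 1)]
    have hcong : ∀ j ∈ Finset.Icc 1 h',
        (x - y) * (if d - j = j then x ^ j * y ^ j
          else x ^ (d - j) * y ^ j + x ^ j * y ^ (d - j))
          = uu x y d j - uu x y d (j + 1) := by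
      intro j hj
      simp only [Finset.mem_Icc] at hj
      rw [if_neg (by omega), uu_step x y (by omega)]
    rw [Finset.sum_congr rfl hcong, ← Finset.Ico_add_one_right_eq_Icc, Finset.sum_Ico_eq_sum_range]
    simp only [Nat.succ_sub_one, Nat.add_sub_cancel, Nat.add_assoc]
    rw [Finset.sum_range_sub' (fun i => uu x y d (1 + i)) h']
    have hlast : (x - y) * (if d - (h' + 1) = h' + 1 then x ^ (h' + 1) * y ^ (h' + 1)
        else x ^ (d - (h' + 1)) * y ^ (h' + 1) + x ^ (h' + 1) * y ^ (d - (h' + 1)))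
        = uu x y d (h' + 1) := by
      rw [if_pos (by omega)]
      simp only [uu, show d + 1 - (h' + 1) = h' + 1 + 1 from by omega]
      ring
    rw [hlast]
    simp only [Nat.add_zero, show 1 + h' = h' + 1 from by omega]
    ring
  · -- d = 2 h + 1
    have hdiv : d / 2 = h := by omega
    rw [hdiv]
    have hcong : ∀ j ∈ Finset.Icc 1 h,
        (x - y) * (if d - j = j then x ^ j * y ^ j
          else x ^ (d - j) * y ^ j + x ^ j * y ^ (d - j))
          = uu x y d j - uu x y d (j + 1) := by
      intro j hj
      simp only [Finset.mem_Icc] at hj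
      rw [if_neg (by omega), uu_step x y (by omega)]
    rw [Finset.sum_congr rfl hcong, ← Finset.Ico_add_one_right_eq_Icc, Finset.sum_Ico_eq_sum_range]
    simp only [Nat.succ_sub_one, Nat.add_sub_cancel, Nat.add_assoc]
    rw [Finset.sum_range_sub' (fun i => uu x y d (1 + i)) h]
    have hz : uu x y d (1 + h) = 0 := by
      simp only [uu, show d + 1 - (1 + h) = 1 + h from by omega]
      ring
    rw [hz]
    simp only [Nat.add_zero]
    ring

lemma main_id (x y : R) (d : ℕ) (hd : 1 ≤ d) :
    (x + y) * (x ^ d - y ^ d) =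
      (x - y) * (x ^ d + y ^ d + 2 * ∑ j ∈ Finset.Icc 1 (d / 2),
        (if d - j = j then x ^ j * y ^ j else x ^ (d - j) * y ^ j + x ^ j * y ^ (d - j))) := by
  have h := tele x y d hd
  have hu : uu x y d 1 = x ^ d * y - x * y ^ d := by
    simp only [uu, Nat.add_sub_cancel, pow_one]
  rw [hu] at h
  linear_combination (-2 : R) * h

end Aux

lemma euler2_zero_pow (p q : ℕ) :
    euler2 0 (X 0 ^ p * X 1 ^ q) = C (p : ℂ) * (X 0 ^ p * X 1 ^ q) := by
  show X 0 * pderiv 0 (X 0 ^ p * X 1 ^ q) = _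
  rw [pderiv_mul, pderiv_pow, pderiv_pow, pderiv_X_self, pderiv_X_of_ne (by decide),
    map_natCast (C : ℂ →+* MvPolynomial (Fin 2) ℂ) p]
  cases p with
  | zero => simp
  | succ n =>
    simp only [Nat.add_sub_cancel]
    push_cast
    ring

lemma euler2_one_pow (p q : ℕ) :
    euler2 1 (X 0 ^ p * X 1 ^ q) = C (q : ℂ) * (X 0 ^ p * X 1 ^ q) := by
  show X 1 * pderiv 1 (X 0 ^ p * X 1 ^ q) = _
  rw [pderiv_mul, pderiv_pow, pderiv_pow, pderiv_X_self, pderiv_X_of_ne (by decide),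
    map_natCast (C : ℂ →+* MvPolynomial (Fin 2) ℂ) q]
  cases q with
  | zero => simp
  | succ n =>
    simp only [Nat.add_sub_cancel]
    push_cast
    ring

lemma euler2_add (i : Fin 2) (f g : MvPolynomial (Fin 2) ℂ) :
    euler2 i (f + g) = euler2 i f + euler2 i g := by
  show X i * pderiv i (f + g) = _
  rw [map_add, mul_add]

lemma euler2_C_mul (i : Fin 2) (c : ℂ) (f : MvPolynomial (Fin 2) ℂ) :
    euler2 i (C c * f) = C c * euler2 i f := by
  show X i * pderiv i (C c * f) = _
  rw [pderiv_C_mul]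
  ring

/-- Diagonal part: the pure second-order terms act on `m_λ` by `a² + b²`. -/
lemma euler2_diag (a b : ℕ) :
    euler2 0 (euler2 0 (mSym a b)) + euler2 1 (euler2 1 (mSym a b)) =
      C ((a : ℂ) ^ 2 + (b : ℂ) ^ 2) * mSym a b := by
  rw [mSym]
  split_ifs with h
  · subst h
    rw [euler2_zero_pow, euler2_C_mul, euler2_zero_pow,
      euler2_one_pow, euler2_C_mul, euler2_one_pow]
    simp only [map_add, map_pow]
    ring
  · rw [euler2_add, euler2_zero_pow, euler2_zero_pow,
      euler2_add, euler2_C_mul, euler2_C_mul, euler2_zero_pow, euler2_zero_pow,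
      euler2_add, euler2_one_pow, euler2_one_pow,
      euler2_add, euler2_C_mul, euler2_C_mul, euler2_one_pow, euler2_one_pow]
    simp only [map_add, map_pow]
    ring

/-- The first-order difference term on `m_λ`. -/
lemma euler2_diff (a b : ℕ) :
    euler2 0 (mSym a b) - euler2 1 (mSym a b) =
      C ((a : ℂ) - (b : ℂ)) * (X 0 ^ a * X 1 ^ b - X 0 ^ b * X 1 ^ a) := by
  rw [mSym]
  split_ifs with h
  · subst h
    rw [euler2_zero_pow, euler2_one_pow]
    ring
  · rw [euler2_add, euler2_zero_pow, euler2_zero_pow,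
      euler2_add, euler2_one_pow, euler2_one_pow]
    rw [map_sub]
    ring

lemma mSym_factor {a b j : ℕ} (hb : b ≤ a) (h1 : 1 ≤ j) (hj : j ≤ (a - b) / 2) :
    mSym (a - j) (b + j) = X 0 ^ b * X 1 ^ b *
      (if (a - b) - j = j then X 0 ^ j * X 1 ^ j
        else X 0 ^ ((a - b) - j) * X 1 ^ j + X 0 ^ j * X 1 ^ ((a - b) - j)) := by
  have hd : 2 * j ≤ a - b := by omega
  rcases eq_or_ne (a - b - j) j with hc | hc
  · rw [if_pos hc, mSym, if_pos (by omega), show a - j = b + j from by omega, pow_add, pow_add]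
    ring
  · rw [if_neg hc, mSym, if_neg (by omega),
      show a - j = b + (a - b - j) from by omega, pow_add, pow_add]
    ring

/-- Factoring `X 0 - X 1` out of the numerator of the Calogero interaction term. -/
lemma numer (k : ℂ) (a b : ℕ) (hab : b ≤ a) :
    C k * (X 0 + X 1) * (euler2 0 (mSym a b) - euler2 1 (mSym a b)) =
      (X 0 - X 1) * (C (k * ((a : ℂ) - (b : ℂ))) * mSym a b +
        ∑ j ∈ Finset.Icc 1 ((a - b) / 2),
          C (2 * (k * ((a : ℂ) - (b : ℂ)))) * mSym (a - j) (b + j)) := by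
  rcases eq_or_lt_of_le hab with rfl | hlt
  · simp [euler2_diff, Nat.sub_self, sub_self]
  · obtain ⟨d, rfl⟩ : ∃ d, a = b + d := ⟨a - b, by omega⟩
    have hd : 1 ≤ d := by omega
    have hd2 : b + d - b = d := by omega
    rw [euler2_diff, hd2]
    have hm : mSym (b + d) b = X 0 ^ b * X 1 ^ b * (X 0 ^ d + X 1 ^ d) := by
      rw [mSym, if_neg (by omega), pow_add]
      ring
    have hmono : (X 0 : MvPolynomial (Fin 2) ℂ) ^ (b + d) * X 1 ^ b
        - X 0 ^ b * X 1 ^ (b + d) = X 0 ^ b * X 1 ^ b * (X 0 ^ d - X 1 ^ d) := by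
      rw [pow_add]
      ring
    have hs : ∀ j ∈ Finset.Icc 1 (d / 2),
        C (2 * (k * (((b + d : ℕ) : ℂ) - (b : ℂ)))) * mSym (b + d - j) (b + j) =
        C (2 * (k * (((b + d : ℕ) : ℂ) - (b : ℂ)))) * (X 0 ^ b * X 1 ^ b *
          (if d - j = j then X 0 ^ j * X 1 ^ j
            else X 0 ^ (d - j) * X 1 ^ j + X 0 ^ j * X 1 ^ (d - j))) := by
      intro j hj
      simp only [Finset.mem_Icc] at hj
      rw [mSym_factor (by omega) hj.1 (by rw [hd2]; exact hj.2), hd2]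
    rw [Finset.sum_congr rfl hs, ← Finset.mul_sum, ← Finset.mul_sum, hm, hmono]
    have hcast : ((b + d : ℕ) : ℂ) - (b : ℂ) = (d : ℂ) := by push_cast; ring
    rw [hcast]
    simp only [map_mul, map_ofNat]
    linear_combination (C k * C (d : ℂ) * X 0 ^ b * X 1 ^ b) * main_id (X 0 : MvPolynomial (Fin 2) ℂ) (X 1) d hd

/-- Triangularity of `M` on symmetric monomials: for a partition `λ = (a ≥ b)`,
`M(m_λ) − (a² + b² + k(a−b)) m_λ` is a linear combination of the `m_μ` with
`μ = (a−j, b+j)`, `1 ≤ j ≤ (a−b)/2`. -/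
theorem M2_triangular (k : ℂ) (a b : ℕ) (hab : b ≤ a) :
    ∃ c : ℕ → ℂ,
      M2 k (mSym a b) =
        φ2 (C ((a : ℂ) ^ 2 + (b : ℂ) ^ 2 + k * ((a : ℂ) - (b : ℂ))) * mSym a b) +
          ∑ j ∈ Finset.Icc 1 ((a - b) / 2), φ2 (C (c j) * mSym (a - j) (b + j)) := by
  refine ⟨fun _ => 2 * (k * ((a : ℂ) - (b : ℂ))), ?_⟩
  have hX0 : (X 0 - X 1 : MvPolynomial (Fin 2) ℂ) ≠ 0 := by
    intro h
    have := congrArg (coeff (Finsupp.single 0 1)) h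
    simp [coeff_sub, coeff_X', Finsupp.single_eq_single_iff] at this
  have hX : φ2 (X 0 - X 1 : MvPolynomial (Fin 2) ℂ) ≠ 0 := fun h =>
    hX0 (IsFractionRing.injective (MvPolynomial (Fin 2) ℂ) K2 (by rw [h, map_zero]))
  have hdiv : ∀ Q : MvPolynomial (Fin 2) ℂ,
      φ2 ((X 0 - X 1) * Q) / φ2 (X 0 - X 1) = φ2 Q := fun Q => by
    rw [map_mul, mul_div_cancel_left₀ _ hX]
  rw [M2, numer k a b hab, hdiv]
  rw [← map_add, ← map_add]
  have key : euler2 0 (euler2 0 (mSym a b)) + euler2 1 (euler2 1 (mSym a b)) +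
      (C (k * ((a : ℂ) - (b : ℂ))) * mSym a b +
        ∑ j ∈ Finset.Icc 1 ((a - b) / 2),
          C (2 * (k * ((a : ℂ) - (b : ℂ)))) * mSym (a - j) (b + j)) =
      C ((a : ℂ) ^ 2 + (b : ℂ) ^ 2 + k * ((a : ℂ) - (b : ℂ))) * mSym a b +
        ∑ j ∈ Finset.Icc 1 ((a - b) / 2),
          C (2 * (k * ((a : ℂ) - (b : ℂ)))) * mSym (a - j) (b + j) := by
    rw [euler2_diag]
    simp only [map_add, map_sub, map_mul, map_pow, map_ofNat]
    ring
  rw [key, map_add, map_sum]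
end
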